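/- arXiv:1307.1987 — 2 statements merged into one kernel-verified Lean document; each statement's English description precedes it below -/
import Mathlib

section
/- Let D be an abelian category with a distinguished co-Giraud subcategory (D, C, j, r), and let (T, F) be a torsion pair on C. Then the classes T̂ := { X ∈ D | X ∈ ^⊥S and r(X) ∈ T } and F̂ := { Y ∈ D | r(Y) ∈ F } form a torsion pair (T̂, F̂) on D which moreover satisfies j(T) ⊆ T̂, j(F) ⊆ F̂, r(T̂) = T and r(F̂) = F. -/
open CategoryTheory Limits CategoryTheory.Pretriangulated

universe w'' w' w v'' u'' v' u' v u

namespace TiltedGiraudPaper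

section Basics

variable (C : Type u) [Category.{v} C]

/-- A class of objects is closed under extensions: for every short exact sequence,
if the two outer terms belong to the class, then so does the middle term. -/
def ClosedUnderExtensions [HasZeroMorphisms C] (P : Set C) : Prop :=
  ∀ S : ShortComplex C, S.ShortExact → S.X₁ ∈ P → S.X₃ ∈ P → S.X₂ ∈ P

/-- A class of objects is closed under (existing small) inductive limits. -/
def ClosedUnderColimits (P : Set C) : Prop :=
  ∀ {J : Type v} [SmallCategory J] {F : J ⥤ C} (c : Cocone F),
    IsColimit c → (∀ j, F.obj j ∈ P) → c.pt ∈ P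

/-- A class of objects is closed under (existing small) projective limits. -/
def ClosedUnderLimits (P : Set C) : Prop :=
  ∀ {J : Type v} [SmallCategory J] {F : J ⥤ C} (c : Cone F),
    IsLimit c → (∀ j, F.obj j ∈ P) → c.pt ∈ P

/-- A torsion class: a class of objects closed under inductive limits and extensions. -/
def IsTorsionClass [HasZeroMorphisms C] (P : Set C) : Prop :=
  ClosedUnderColimits C P ∧ ClosedUnderExtensions C P

/-- A torsion-free class: a class of objects closed under projective limits and extensions. -/
def IsTorsionFreeClass [HasZeroMorphisms C] (P : Set C) : Prop :=
  ClosedUnderLimits C P ∧ ClosedUnderExtensions C P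

/-- A Serre class: for every short exact sequence, the middle term belongs to the class
if and only if both outer terms do. -/
def IsSerreClass [HasZeroMorphisms C] (P : Set C) : Prop :=
  ∀ S : ShortComplex C, S.ShortExact → (S.X₂ ∈ P ↔ (S.X₁ ∈ P ∧ S.X₃ ∈ P))

/-- A torsion pair `(torsion, torsionFree)` on an abelian category: a torsion class and a
torsion-free class with no nonzero morphisms from the first to the second, such that every
object is an extension of a torsion-free object by a torsion object. -/
structure TorsionPair [HasZeroMorphisms C] where
  torsion : Set C
  torsionFree : Set C
  isTorsionClass : IsTorsionClass C torsion
  isTorsionFreeClass : IsTorsionFreeClass C torsionFree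
  hom_eq_zero : ∀ ⦃T F : C⦄, T ∈ torsion → F ∈ torsionFree → ∀ f : T ⟶ F, f = 0
  exists_ses : ∀ A : C, ∃ (T F : C) (f : T ⟶ A) (g : A ⟶ F) (w : f ≫ g = 0),
    T ∈ torsion ∧ F ∈ torsionFree ∧ (ShortComplex.mk f g w).ShortExact

end Basics

section Functors

variable {C : Type u} [Category.{v} C] {D : Type u'} [Category.{v'} D]

/-- The essential image of a class of objects under a functor. -/
def imageSet (L : C ⥤ D) (P : Set C) : Set D :=
  {Y | ∃ X, X ∈ P ∧ Nonempty (L.obj X ≅ Y)}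

/-- The preimage of a class of objects under a functor. -/
def preimageSet (L : C ⥤ D) (P : Set D) : Set C :=
  {X | L.obj X ∈ P}

/-- The kernel of a functor: the class of objects sent to a zero object. -/
def kerSet (L : C ⥤ D) : Set C :=
  {X | IsZero (L.obj X)}

end Functors

section Perp

variable {C : Type u} [Category.{v} C]

/-- `S^⊥`: the class of objects receiving no nonzero morphism from objects of `S`. -/
def rightPerp [HasZeroMorphisms C] (S : Set C) : Set C :=
  {Y | ∀ X ∈ S, ∀ f : X ⟶ Y, f = 0}

/-- `^⊥S`: the class of objects admitting no nonzero morphism to objects of `S`. -/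
def leftPerp [HasZeroMorphisms C] (S : Set C) : Set C :=
  {X | ∀ Y ∈ S, ∀ f : X ⟶ Y, f = 0}

/-- The class of morphisms whose kernel and cokernel belong to the class `S`. -/
def serreW [HasZeroMorphisms C] (S : Set C) : MorphismProperty C := fun X Y f =>
  (∃ (K : C) (k : K ⟶ X) (w : k ≫ f = 0), K ∈ S ∧ Nonempty (IsLimit (KernelFork.ofι k w))) ∧
  (∃ (Q : C) (q : Y ⟶ Q) (w : f ≫ q = 0), Q ∈ S ∧ Nonempty (IsColimit (CokernelCofork.ofπ q w)))

end Perp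

/-- `L : C ⥤ D` exhibits `D` as the (Gabriel) quotient of `C` by the Serre class `S`:
`L` is exact, essentially surjective, its kernel is exactly `S`, and `L` is a localization
of `C` at the class of morphisms with kernel and cokernel in `S`. -/
def IsSerreQuotient {C : Type u} [Category.{v} C] [HasZeroMorphisms C]
    {D : Type u'} [Category.{v'} D] (S : Set C) (L : C ⥤ D) : Prop :=
  Nonempty (PreservesFiniteLimits L) ∧ Nonempty (PreservesFiniteColimits L) ∧
  L.EssSurj ∧ (∀ X : C, IsZero (L.obj X) ↔ X ∈ S) ∧
  L.IsLocalization (serreW S)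

/-!
Since `j` is fully faithful, `r` inverts the counit `ε : r ⋙ j ⟶ 𝟭 D`. Hence for `A ∈ ^⊥(Ker r)`
the cokernel of `ε_A` lies in `Ker r`, so `ε_A` is epi and a morphism out of `A` vanishes as soon
as its image under `r` does; this gives `Hom(T̂, F̂) = 0`. To decompose `A ∈ D`, take the torsion
subobject `t : T ⟶ r A` in `C`: the image of its adjunct `j T ⟶ A` is a quotient of `j T`, hence in
`^⊥(Ker r)`, and is sent by `r` to `T`, while by right exactness of `r` its cokernel is sent to
`r A / T ≅ F`. Orthogonal classes with such decompositions always form a torsion pair, each being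
the perpendicular of the other.
-/

section Orthogonality

variable {C : Type u} [Category.{v} C]

def IsClosedUnderIso (P : Set C) : Prop :=
  ∀ ⦃A B : C⦄, (A ≅ B) → A ∈ P → B ∈ P

lemma ClosedUnderColimits.isClosedUnderIso {P : Set C} (h : ClosedUnderColimits C P) :
    IsClosedUnderIso P := fun A _ e hA =>
  h _ ((isColimitConstCocone (Discrete PUnit) A).ofIsoColimit (Cocone.extendIso _ e))
    fun _ => hA

lemma ClosedUnderLimits.isClosedUnderIso {P : Set C} (h : ClosedUnderLimits C P) :
    IsClosedUnderIso P := fun A _ e hA =>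
  h _ ((isLimitConstCone (Discrete PUnit) A).ofIsoLimit (Cone.extendIso _ e))
    fun _ => hA

lemma IsClosedUnderIso.preimageSet {D : Type u'} [Category.{v'} D] {P : Set C}
    (hP : IsClosedUnderIso P) (L : D ⥤ C) : IsClosedUnderIso (preimageSet L P) :=
  fun _ _ e hA => hP (L.mapIso e) hA

lemma IsClosedUnderIso.inter {P Q : Set C} (hP : IsClosedUnderIso P) (hQ : IsClosedUnderIso Q) :
    IsClosedUnderIso (P ∩ Q) :=
  fun _ _ e hA => ⟨hP e hA.1, hQ e hA.2⟩

variable [HasZeroMorphisms C]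

lemma TorsionPair.isClosedUnderIso_torsion (p : TorsionPair C) : IsClosedUnderIso p.torsion :=
  ClosedUnderColimits.isClosedUnderIso p.isTorsionClass.1

lemma TorsionPair.isClosedUnderIso_torsionFree (p : TorsionPair C) :
    IsClosedUnderIso p.torsionFree :=
  ClosedUnderLimits.isClosedUnderIso p.isTorsionFreeClass.1

lemma mem_leftPerp_of_epi {P : Set C} {X Y : C} (e : X ⟶ Y) [Epi e] (hX : X ∈ leftPerp P) :
    Y ∈ leftPerp P := fun Z hZ f => by
  rw [← cancel_epi e, comp_zero]
  exact hX Z hZ (e ≫ f)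

lemma isClosedUnderIso_leftPerp (P : Set C) : IsClosedUnderIso (leftPerp P) :=
  fun _ _ e hX => mem_leftPerp_of_epi e.hom hX

lemma closedUnderColimits_leftPerp (P : Set C) : ClosedUnderColimits C (leftPerp P) :=
  fun _ hc hmem Y hY _ => hc.hom_ext fun i => by
    rw [comp_zero]
    exact hmem i Y hY _

lemma closedUnderLimits_rightPerp (P : Set C) : ClosedUnderLimits C (rightPerp P) :=
  fun _ hc hmem X hX _ => hc.hom_ext fun i => by
    rw [zero_comp]
    exact hmem i X hX _

end Orthogonality

lemma isIso_map_factorThruImage {C : Type u} [Category.{v} C] [Balanced C]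
    {D : Type u'} [Category.{v'} D] [Abelian D] (F : D ⥤ C) [F.PreservesEpimorphisms]
    {Y Z : D} (φ : Y ⟶ Z) [Mono (F.map φ)] :
    IsIso (F.map (Abelian.factorThruImage φ)) := by
  have : Mono (F.map (Abelian.factorThruImage φ) ≫ F.map (Abelian.image.ι φ)) := by
    rwa [← F.map_comp, Abelian.image.fac]
  have := mono_of_mono (F.map (Abelian.factorThruImage φ)) (F.map (Abelian.image.ι φ))
  exact isIso_of_mono_of_epi _

section Extensions

variable {C : Type u} [Category.{v} C] [Preadditive C] [Balanced C]

lemma closedUnderExtensions_leftPerp (P : Set C) : ClosedUnderExtensions C (leftPerp P) :=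
  fun _ hS h₁ h₃ Y hY f => by
    obtain ⟨d, hd⟩ := CokernelCofork.IsColimit.desc' hS.gIsCokernel f (h₁ Y hY _)
    rw [← hd, h₃ Y hY d, comp_zero]

lemma closedUnderExtensions_rightPerp (P : Set C) : ClosedUnderExtensions C (rightPerp P) :=
  fun _ hS h₁ h₃ X hX f => by
    obtain ⟨l, hl⟩ := KernelFork.IsLimit.lift' hS.fIsKernel f (h₃ X hX _)
    rw [← hl, h₁ X hX l, zero_comp]

variable {T F : Set C}

lemma eq_leftPerp_of_exists_shortExact (hT : IsClosedUnderIso T)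
    (hom_eq_zero : ∀ ⦃X Y : C⦄, X ∈ T → Y ∈ F → ∀ f : X ⟶ Y, f = 0)
    (exists_ses : ∀ A : C, ∃ (X Y : C) (f : X ⟶ A) (g : A ⟶ Y) (w : f ≫ g = 0),
      X ∈ T ∧ Y ∈ F ∧ (ShortComplex.mk f g w).ShortExact) :
    T = leftPerp F := by
  ext A
  refine ⟨fun hA Y hY f => hom_eq_zero hA hY f, fun hA => ?_⟩
  obtain ⟨X, Y, f, g, w, hX, hY, hS⟩ := exists_ses A
  have := hS.mono_f
  have : Epi f := hS.exact.epi_f (hA Y hY g)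
  have : IsIso f := isIso_of_mono_of_epi f
  exact hT (asIso f) hX

lemma eq_rightPerp_of_exists_shortExact (hF : IsClosedUnderIso F)
    (hom_eq_zero : ∀ ⦃X Y : C⦄, X ∈ T → Y ∈ F → ∀ f : X ⟶ Y, f = 0)
    (exists_ses : ∀ A : C, ∃ (X Y : C) (f : X ⟶ A) (g : A ⟶ Y) (w : f ≫ g = 0),
      X ∈ T ∧ Y ∈ F ∧ (ShortComplex.mk f g w).ShortExact) :
    F = rightPerp T := by
  ext A
  refine ⟨fun hA X hX f => hom_eq_zero hX hA f, fun hA => ?_⟩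
  obtain ⟨X, Y, f, g, w, hX, hY, hS⟩ := exists_ses A
  have := hS.epi_g
  have : Mono g := hS.exact.mono_g (hA X hX f)
  have : IsIso g := isIso_of_mono_of_epi g
  exact hF (asIso g).symm hY

def TorsionPair.ofExistsShortExact (T F : Set C) (hT : IsClosedUnderIso T)
    (hF : IsClosedUnderIso F)
    (hom_eq_zero : ∀ ⦃X Y : C⦄, X ∈ T → Y ∈ F → ∀ f : X ⟶ Y, f = 0)
    (exists_ses : ∀ A : C, ∃ (X Y : C) (f : X ⟶ A) (g : A ⟶ Y) (w : f ≫ g = 0),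
      X ∈ T ∧ Y ∈ F ∧ (ShortComplex.mk f g w).ShortExact) : TorsionPair C where
  torsion := T
  torsionFree := F
  isTorsionClass := by
    rw [eq_leftPerp_of_exists_shortExact hT hom_eq_zero exists_ses]
    exact ⟨closedUnderColimits_leftPerp F, closedUnderExtensions_leftPerp F⟩
  isTorsionFreeClass := by
    rw [eq_rightPerp_of_exists_shortExact hF hom_eq_zero exists_ses]
    exact ⟨closedUnderLimits_rightPerp T, closedUnderExtensions_rightPerp T⟩
  hom_eq_zero := hom_eq_zero
  exists_ses := exists_ses

end Extensions

section CoGiraud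

variable {C : Type u} [Category.{v} C] {D : Type u'} [Category.{v'} D] {j : C ⥤ D} {r : D ⥤ C}

lemma obj_mem_leftPerp_kerSet [HasZeroMorphisms D] (adj : j ⊣ r) (X : C) :
    j.obj X ∈ leftPerp (kerSet r) := fun _ hS _ =>
  (adj.homEquiv _ _).injective (hS.eq_of_tgt _ _)

lemma obj_mem_preimageSet [j.Full] [j.Faithful] (adj : j ⊣ r) {P : Set C}
    (hP : IsClosedUnderIso P) {X : C} (hX : X ∈ P) : j.obj X ∈ preimageSet r P :=
  hP (asIso (adj.unit.app X)) hX

lemma imageSet_eq_of_subset_preimageSet [j.Full] [j.Faithful] (adj : j ⊣ r) {P : Set C}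
    (hP : IsClosedUnderIso P) {Q : Set D} (hQ : Q ⊆ preimageSet r P)
    (hjQ : ∀ X ∈ P, j.obj X ∈ Q) : imageSet r Q = P := by
  ext Y
  exact ⟨fun ⟨X, hX, ⟨e⟩⟩ => hP e (hQ hX),
    fun hY => ⟨j.obj Y, hjQ Y hY, ⟨(asIso (adj.unit.app Y)).symm⟩⟩⟩

lemma map_homEquiv_symm [j.Full] [j.Faithful] (adj : j ⊣ r) {X : C} {A : D} (t : X ⟶ r.obj A) :
    r.map ((adj.homEquiv X A).symm t) = inv (adj.unit.app X) ≫ t := by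
  rw [IsIso.eq_inv_comp]
  simpa only [Adjunction.homEquiv_unit] using (adj.homEquiv X A).apply_symm_apply t

lemma mono_map_homEquiv_symm [j.Full] [j.Faithful] (adj : j ⊣ r) {X : C} {A : D}
    (t : X ⟶ r.obj A) [Mono t] : Mono (r.map ((adj.homEquiv X A).symm t)) := by
  rw [map_homEquiv_symm]
  infer_instance

lemma epi_counit_app_of_mem_leftPerp [Abelian D] [HasZeroMorphisms C]
    [r.PreservesZeroMorphisms] [r.PreservesEpimorphisms] [j.Full] [j.Faithful]
    (adj : j ⊣ r) {A : D} (hA : A ∈ leftPerp (kerSet r)) : Epi (adj.counit.app A) := by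
  have hπ : r.map (cokernel.π (adj.counit.app A)) = 0 := by
    rw [← cancel_epi (r.map (adj.counit.app A)), ← r.map_comp, cokernel.condition, r.map_zero,
      comp_zero]
  exact Abelian.epi_of_cokernel_π_eq_zero _ (hA _ (IsZero.of_epi_eq_zero _ hπ) _)

lemma eq_zero_of_map_eq_zero [Abelian D] [HasZeroMorphisms C]
    [r.PreservesZeroMorphisms] [r.PreservesEpimorphisms] [j.Full] [j.Faithful]
    (adj : j ⊣ r) {X Y : D} (hX : X ∈ leftPerp (kerSet r)) (f : X ⟶ Y) (hf : r.map f = 0) :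
    f = 0 := by
  have := epi_counit_app_of_mem_leftPerp adj hX
  rw [← cancel_epi (adj.counit.app X), comp_zero]
  apply (adj.homEquiv _ _).injective
  simp [Adjunction.homEquiv_unit, hf]

section Decomposition

variable [Abelian C] [Abelian D] [j.Full] [j.Faithful] {X : C} {A : D}

noncomputable def mapImageHomEquivSymmIso [r.PreservesEpimorphisms] (adj : j ⊣ r)
    (t : X ⟶ r.obj A) [Mono t] :
    r.obj (Abelian.image ((adj.homEquiv X A).symm t)) ≅ X := by
  have := mono_map_homEquiv_symm adj t
  have := isIso_map_factorThruImage r ((adj.homEquiv X A).symm t)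
  exact (asIso (r.map (Abelian.factorThruImage ((adj.homEquiv X A).symm t)))).symm ≪≫
    (asIso (adj.unit.app X)).symm

noncomputable def mapCokernelHomEquivSymmIso [PreservesFiniteColimits r] (adj : j ⊣ r)
    (t : X ⟶ r.obj A) :
    r.obj (cokernel ((adj.homEquiv X A).symm t)) ≅ cokernel t :=
  PreservesCokernel.iso r _ ≪≫ cokernelIsoOfEq (map_homEquiv_symm adj t) ≪≫
    cokernelEpiComp (inv (adj.unit.app X)) t

lemma exists_shortExact_mem_preimageSet [PreservesFiniteColimits r] (adj : j ⊣ r)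
    (p : TorsionPair C) (A : D) :
    ∃ (X Y : D) (f : X ⟶ A) (g : A ⟶ Y) (w : f ≫ g = 0),
      X ∈ preimageSet r p.torsion ∩ leftPerp (kerSet r) ∧ Y ∈ preimageSet r p.torsionFree ∧
      (ShortComplex.mk f g w).ShortExact := by
  obtain ⟨T, F, t, u, w, hT, hF, hS⟩ := p.exists_ses (r.obj A)
  have := hS.mono_f
  set φ := (adj.homEquiv T A).symm t
  -- `Abelian.image φ` is by definition `kernel (cokernel.π φ)`.
  refine ⟨Abelian.image φ, cokernel φ, Abelian.image.ι φ, cokernel.π φ, kernel.condition _,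
    ⟨?_, ?_⟩, ?_, ShortComplex.ShortExact.mk' (ShortComplex.exact_kernel _) inferInstance
      inferInstance⟩
  · exact p.isClosedUnderIso_torsion (mapImageHomEquivSymmIso adj t).symm hT
  · exact mem_leftPerp_of_epi (Abelian.factorThruImage φ) (obj_mem_leftPerp_kerSet adj T)
  · exact p.isClosedUnderIso_torsionFree
      (hS.gIsCokernel.coconePointUniqueUpToIso (cokernelIsCokernel t) ≪≫
        (mapCokernelHomEquivSymmIso adj t).symm) hF

end Decomposition

end CoGiraud

theorem torsionPair_lift_along_coGiraud_general
    {D : Type u} [Category.{v} D] [Abelian D]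
    {C : Type u} [Category.{v} C] [Abelian C]
    (j : C ⥤ D) (r : D ⥤ C) (adj : j ⊣ r)
    [PreservesFiniteColimits r] [j.Full] [j.Faithful]
    (p : TorsionPair C) :
    ∃ q : TorsionPair D,
      q.torsion = preimageSet r p.torsion ∩ leftPerp (kerSet r) ∧
      q.torsionFree = preimageSet r p.torsionFree ∧
      (∀ T ∈ p.torsion, j.obj T ∈ q.torsion) ∧
      (∀ F ∈ p.torsionFree, j.obj F ∈ q.torsionFree) ∧
      imageSet r q.torsion = p.torsion ∧
      imageSet r q.torsionFree = p.torsionFree := by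
  have hT_iso : IsClosedUnderIso (preimageSet r p.torsion ∩ leftPerp (kerSet r)) :=
    (p.isClosedUnderIso_torsion.preimageSet r).inter (isClosedUnderIso_leftPerp _)
  have hF_iso : IsClosedUnderIso (preimageSet r p.torsionFree) :=
    p.isClosedUnderIso_torsionFree.preimageSet r
  have hjT : ∀ T ∈ p.torsion, j.obj T ∈ preimageSet r p.torsion ∩ leftPerp (kerSet r) :=
    fun T hT => ⟨obj_mem_preimageSet adj p.isClosedUnderIso_torsion hT,
      obj_mem_leftPerp_kerSet adj T⟩
  have hjF : ∀ F ∈ p.torsionFree, j.obj F ∈ preimageSet r p.torsionFree :=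
    fun F hF => obj_mem_preimageSet adj p.isClosedUnderIso_torsionFree hF
  refine ⟨TorsionPair.ofExistsShortExact _ _ hT_iso hF_iso
    (fun X Y hX hY f => eq_zero_of_map_eq_zero adj hX.2 f (p.hom_eq_zero hX.1 hY _))
    (exists_shortExact_mem_preimageSet adj p), rfl, rfl, hjT, hjF, ?_, ?_⟩
  · exact imageSet_eq_of_subset_preimageSet adj p.isClosedUnderIso_torsion
      Set.inter_subset_left hjT
  · exact imageSet_eq_of_subset_preimageSet adj p.isClosedUnderIso_torsionFree subset_rfl hjF

/-- **Proposition.** Let `(D, C, j, r)` be a distinguished co-Giraud subcategory and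
`(T, F)` a torsion pair on `C`.  Then `T̂ = r^←(T) ∩ ^⊥(Ker r)` and `F̂ = r^←(F)` form a
torsion pair on `D` with `j(T) ⊆ T̂`, `j(F) ⊆ F̂`, `r(T̂) = T` and `r(F̂) = F`. -/
theorem torsionPair_lift_along_coGiraud
    {D : Type u} [Category.{v} D] [Abelian D]
    {C : Type u} [Category.{v} C] [Abelian C]
    (j : C ⥤ D) (r : D ⥤ C) (adj : j ⊣ r)
    [PreservesFiniteLimits r] [PreservesFiniteColimits r] [j.Full] [j.Faithful]
    (p : TorsionPair C) :
    ∃ q : TorsionPair D,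
      q.torsion = preimageSet r p.torsion ∩ leftPerp (kerSet r) ∧
      q.torsionFree = preimageSet r p.torsionFree ∧
      (∀ T ∈ p.torsion, j.obj T ∈ q.torsion) ∧
      (∀ F ∈ p.torsionFree, j.obj F ∈ q.torsionFree) ∧
      imageSet r q.torsion = p.torsion ∧
      imageSet r q.torsionFree = p.torsionFree :=
  torsionPair_lift_along_coGiraud_general j r adj p

end TiltedGiraudPaper
end

section
/- Let D be an abelian category with a distinguished co-Giraud subcategory (D, C, j, r), endowed with a torsion pair (X, Y). Define r(X) := { T ∈ C | T ≅ r(X) for some X ∈ X } and r(Y) := { F ∈ C | F ≅ r(Y) for some Y ∈ Y }. Then (r(X), r(Y)) is a torsion pair on C if and only if jr(X) ⊆ X; and in this case j^←(X) = r(X), where j^←(X) := { C ∈ C | j(C) ∈ X }. -/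
/-!
Every object `A` of `C` is `r (j A)`, so applying the exact functor `r` to the torsion sequence
of `j A` presents `A` as an extension of an object of `r(Y)` by an object of `r(X)`. In an
abelian category two Hom-orthogonal classes, closed under isomorphisms, with this property are
each other's perpendicular classes and hence form a torsion pair; so `(r(X), r(Y))` is a torsion
pair exactly when `Hom(r X, r Y) ≅ Hom(j r X, Y)` vanishes. If `j r(X) ⊆ X` this is the
orthogonality of `(X, Y)`. Conversely, the map from `j r X` to the torsion-free part of its
torsion sequence transposes to a map `r X ⟶ r F` between the two classes, so it vanishes and
`j r X` is isomorphic to its torsion part.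
-/

open CategoryTheory Limits CategoryTheory.Pretriangulated

universe w'' w' w v'' u'' v' u' v u

namespace TiltedGiraudPaper

section General

variable {A : Type u} [Category.{v} A]

theorem _root_.CategoryTheory.ShortComplex.ShortExact.isIso_f_of_g_eq_zero [Preadditive A]
    [Balanced A] {S : ShortComplex A} (hS : S.ShortExact) (hg : S.g = 0) : IsIso S.f :=
  have := hS.mono_f
  have := hS.exact.epi_f hg
  isIso_of_mono_of_epi _

theorem _root_.CategoryTheory.ShortComplex.ShortExact.isIso_g_of_f_eq_zero [Preadditive A]
    [Balanced A] {S : ShortComplex A} (hS : S.ShortExact) (hf : S.f = 0) : IsIso S.g :=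
  have := hS.epi_g
  have := hS.exact.mono_g hf
  isIso_of_mono_of_epi _

theorem ClosedUnderColimits.mem_of_iso {P : Set A} (h : ClosedUnderColimits A P) {X Y : A}
    (e : X ≅ Y) (hX : X ∈ P) : Y ∈ P :=
  h _ (@IsColimit.extendIso _ _ _ _ _ _ _ e.hom e.isIso_hom
    (isColimitConstCocone (Discrete PUnit.{v + 1}) X)) fun _ => hX

theorem TorsionPair.mem_torsion_of_iso [HasZeroMorphisms A] (p : TorsionPair A) {X Y : A}
    (e : X ≅ Y) (hX : X ∈ p.torsion) : Y ∈ p.torsion :=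
  ClosedUnderColimits.mem_of_iso p.isTorsionClass.1 e hX

theorem isTorsionClass_leftPerp [Preadditive A] [Balanced A] (P : Set A) :
    IsTorsionClass A (leftPerp P) := by
  constructor
  · intro J _ F c hc hmem Z hZ f
    exact hc.hom_ext fun i => by rw [hmem i Z hZ (c.ι.app i ≫ f), comp_zero]
  · intro S hS h1 h3 Z hZ f
    have := hS.epi_g
    obtain ⟨l, hl⟩ := CokernelCofork.IsColimit.desc' hS.exact.gIsCokernel f (h1 Z hZ _)
    dsimp at hl
    rw [← hl, h3 Z hZ l, comp_zero]

theorem isTorsionFreeClass_rightPerp [Preadditive A] [Balanced A] (P : Set A) :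
    IsTorsionFreeClass A (rightPerp P) := by
  constructor
  · intro J _ F c hc hmem Z hZ f
    exact hc.hom_ext fun i => by rw [hmem i Z hZ (f ≫ c.π.app i), zero_comp]
  · intro S hS h1 h3 Z hZ f
    have := hS.mono_f
    obtain ⟨l, hl⟩ := KernelFork.IsLimit.lift' hS.exact.fIsKernel f (h3 Z hZ _)
    dsimp at hl
    rw [← hl, h1 Z hZ l, zero_comp]

def HasShortExactDecompositions [HasZeroMorphisms A] (T F : Set A) : Prop :=
  ∀ X : A, ∃ (T' F' : A) (f : T' ⟶ X) (g : X ⟶ F') (w : f ≫ g = 0),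
    T' ∈ T ∧ F' ∈ F ∧ (ShortComplex.mk f g w).ShortExact

section Decompositions

variable [Preadditive A] [Balanced A] {T F : Set A}

theorem leftPerp_subset_of_hasShortExactDecompositions (h : HasShortExactDecompositions T F)
    (hT : ∀ ⦃X Y : A⦄, (X ≅ Y) → X ∈ T → Y ∈ T) : leftPerp F ⊆ T := by
  intro X hX
  obtain ⟨T', F', f, g, w, hT', hF', hS⟩ := h X
  have := hS.isIso_f_of_g_eq_zero (hX F' hF' g)
  exact hT (asIso f) hT'

theorem rightPerp_subset_of_hasShortExactDecompositions (h : HasShortExactDecompositions T F)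
    (hF : ∀ ⦃X Y : A⦄, (X ≅ Y) → X ∈ F → Y ∈ F) : rightPerp T ⊆ F := by
  intro X hX
  obtain ⟨T', F', f, g, w, hT', hF', hS⟩ := h X
  have := hS.isIso_g_of_f_eq_zero (hX T' hT' f)
  exact hF (asIso g).symm hF'

end Decompositions

def TorsionPair.ofHasShortExactDecompositions [Preadditive A] [Balanced A] (T F : Set A)
    (hT : ∀ ⦃X Y : A⦄, (X ≅ Y) → X ∈ T → Y ∈ T) (hF : ∀ ⦃X Y : A⦄, (X ≅ Y) → X ∈ F → Y ∈ F)
    (hom_eq_zero : ∀ ⦃X Y : A⦄, X ∈ T → Y ∈ F → ∀ f : X ⟶ Y, f = 0)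
    (h : HasShortExactDecompositions T F) : TorsionPair A where
  torsion := T
  torsionFree := F
  isTorsionClass :=
    (Set.Subset.antisymm (show T ⊆ leftPerp F from fun _ hX _ hY => hom_eq_zero hX hY)
      (leftPerp_subset_of_hasShortExactDecompositions h hT)) ▸ isTorsionClass_leftPerp F
  isTorsionFreeClass :=
    (Set.Subset.antisymm (show F ⊆ rightPerp T from fun _ hY _ hX => hom_eq_zero hX hY)
      (rightPerp_subset_of_hasShortExactDecompositions h hF)) ▸ isTorsionFreeClass_rightPerp T
  hom_eq_zero := hom_eq_zero
  exists_ses := h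

end General

section Image

variable {C : Type u} [Category.{v} C] {D : Type u'} [Category.{v'} D]

theorem obj_mem_imageSet (L : C ⥤ D) {P : Set C} {X : C} (hX : X ∈ P) :
    L.obj X ∈ imageSet L P :=
  ⟨X, hX, ⟨Iso.refl _⟩⟩

theorem mem_imageSet_of_iso {L : C ⥤ D} {P : Set C} {Y Y' : D} (e : Y ≅ Y')
    (hY : Y ∈ imageSet L P) : Y' ∈ imageSet L P :=
  let ⟨X, hX, ⟨e'⟩⟩ := hY
  ⟨X, hX, ⟨e' ≪≫ e⟩⟩

theorem hasShortExactDecompositions_imageSet [Abelian C] [Abelian D] (L : C ⥤ D)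
    [PreservesFiniteLimits L] [PreservesFiniteColimits L] [L.EssSurj] {T F : Set C}
    (h : HasShortExactDecompositions T F) :
    HasShortExactDecompositions (imageSet L T) (imageSet L F) := by
  intro Y
  obtain ⟨T', F', f, g, w, hT', hF', hS⟩ := h (L.objPreimage Y)
  let e := L.objObjPreimageIso Y
  refine ⟨L.obj T', L.obj F', L.map f ≫ e.hom, e.inv ≫ L.map g, ?_,
    obj_mem_imageSet L hT', obj_mem_imageSet L hF', ?_⟩
  · simp [← L.map_comp, w]
  · exact ShortComplex.shortExact_of_iso (S₁ := (ShortComplex.mk f g w).map L)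
      (ShortComplex.isoMk (Iso.refl _) e (Iso.refl _) (Category.id_comp _)
        ((e.hom_inv_id_assoc _).trans (Category.comp_id _).symm)) (hS.map_of_exact L)

end Image

theorem _root_.CategoryTheory.Adjunction.homEquiv_eq_zero_iff {C : Type u} [Category.{v} C]
    [HasZeroMorphisms C] {D : Type u'} [Category.{v'} D] [HasZeroMorphisms D] {F : C ⥤ D}
    {G : D ⥤ C} [G.PreservesZeroMorphisms] (adj : F ⊣ G) {X : C} {Y : D} (f : F.obj X ⟶ Y) :
    adj.homEquiv X Y f = 0 ↔ f = 0 := by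
  have h0 : adj.homEquiv X Y 0 = 0 := by rw [adj.homEquiv_unit, G.map_zero, comp_zero]
  rw [← h0, (adj.homEquiv X Y).apply_eq_iff_eq]

theorem _root_.CategoryTheory.Adjunction.essSurj_of_full_of_faithful {C : Type u}
    [Category.{v} C] {D : Type u'} [Category.{v'} D] {L : C ⥤ D} {R : D ⥤ C} (adj : L ⊣ R)
    [L.Full] [L.Faithful] : R.EssSurj :=
  ⟨fun X => ⟨L.obj X, ⟨(asIso (adj.unit.app X)).symm⟩⟩⟩

section CoGiraud

variable {C : Type u} [Category.{v} C] {D : Type u'} [Category.{v'} D] {j : C ⥤ D} {r : D ⥤ C}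

theorem obj_obj_mem_torsion_of_torsionPair_imageSet [HasZeroMorphisms C] [Abelian D]
    (adj : j ⊣ r) (p : TorsionPair D) (q : TorsionPair C)
    (hqT : q.torsion = imageSet r p.torsion) (hqF : q.torsionFree = imageSet r p.torsionFree)
    {X : D} (hX : X ∈ p.torsion) : j.obj (r.obj X) ∈ p.torsion := by
  have := adj.isRightAdjoint
  obtain ⟨T, F, t, s, w, hT, hF, hS⟩ := p.exists_ses (j.obj (r.obj X))
  have hs : s = 0 := (adj.homEquiv_eq_zero_iff s).1 <|
    q.hom_eq_zero (hqT ▸ obj_mem_imageSet r hX) (hqF ▸ obj_mem_imageSet r hF) _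
  have := hS.isIso_f_of_g_eq_zero hs
  exact p.mem_torsion_of_iso (asIso t) hT

theorem hom_eq_zero_of_mem_imageSet [HasZeroMorphisms C] [HasZeroMorphisms D] (adj : j ⊣ r)
    (p : TorsionPair D) (H : ∀ X ∈ p.torsion, j.obj (r.obj X) ∈ p.torsion)
    ⦃T F : C⦄ (hT : T ∈ imageSet r p.torsion) (hF : F ∈ imageSet r p.torsionFree)
    (f : T ⟶ F) : f = 0 := by
  have := adj.isRightAdjoint
  obtain ⟨X, hX, ⟨eX⟩⟩ := hT
  obtain ⟨Y, hY, ⟨eY⟩⟩ := hF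
  have h : eX.hom ≫ f ≫ eY.inv = 0 := by
    rw [← (adj.homEquiv _ _).apply_symm_apply (eX.hom ≫ f ≫ eY.inv), adj.homEquiv_eq_zero_iff]
    exact p.hom_eq_zero (H X hX) hY _
  calc f = eX.inv ≫ (eX.hom ≫ f ≫ eY.inv) ≫ eY.hom := by simp
    _ = 0 := by rw [h, zero_comp, comp_zero]

def imageTorsionPair [Abelian C] [Abelian D] [PreservesFiniteLimits r]
    [PreservesFiniteColimits r] [j.Full] [j.Faithful] (adj : j ⊣ r) (p : TorsionPair D)
    (H : ∀ X ∈ p.torsion, j.obj (r.obj X) ∈ p.torsion) : TorsionPair C :=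
  haveI := adj.essSurj_of_full_of_faithful
  TorsionPair.ofHasShortExactDecompositions (imageSet r p.torsion) (imageSet r p.torsionFree)
    (fun _ _ e hX => mem_imageSet_of_iso e hX) (fun _ _ e hX => mem_imageSet_of_iso e hX)
    (hom_eq_zero_of_mem_imageSet adj p H) (hasShortExactDecompositions_imageSet r p.exists_ses)

theorem preimageSet_eq_imageSet [HasZeroMorphisms D] [j.Full] [j.Faithful] (adj : j ⊣ r)
    (p : TorsionPair D) (H : ∀ X ∈ p.torsion, j.obj (r.obj X) ∈ p.torsion) :
    preimageSet j p.torsion = imageSet r p.torsion := by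
  ext A
  constructor
  · intro hA
    exact ⟨j.obj A, hA, ⟨(asIso (adj.unit.app A)).symm⟩⟩
  · rintro ⟨X, hX, ⟨e⟩⟩
    exact p.mem_torsion_of_iso (j.mapIso e) (H X hX)

end CoGiraud

/-- **Proposition.** Let `(D, C, j, r)` be a distinguished co-Giraud subcategory and
`(X, Y)` a torsion pair on `D`.  Then `(r(X), r(Y))` (essential images) is a torsion pair
on `C` if and only if `jr(X) ⊆ X`; and in this case `j^←(X) = r(X)`. -/
theorem image_torsionPair_iff_coGiraud
    {D : Type u} [Category.{v} D] [Abelian D]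
    {C : Type u} [Category.{v} C] [Abelian C]
    (j : C ⥤ D) (r : D ⥤ C) (adj : j ⊣ r)
    [PreservesFiniteLimits r] [PreservesFiniteColimits r] [j.Full] [j.Faithful]
    (p : TorsionPair D) :
    ((∃ q : TorsionPair C,
        q.torsion = imageSet r p.torsion ∧ q.torsionFree = imageSet r p.torsionFree) ↔
      (∀ X ∈ p.torsion, j.obj (r.obj X) ∈ p.torsion)) ∧
    ((∀ X ∈ p.torsion, j.obj (r.obj X) ∈ p.torsion) →
      preimageSet j p.torsion = imageSet r p.torsion) := by
  refine ⟨⟨?_, fun H => ⟨imageTorsionPair adj p H, rfl, rfl⟩⟩, preimageSet_eq_imageSet adj p⟩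
  rintro ⟨q, hqT, hqF⟩ X hX
  exact obj_obj_mem_torsion_of_torsionPair_imageSet adj p q hqT hqF hX

end TiltedGiraudPaper
end
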